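/- Let p be an odd prime and let Λ = Λ(0; 1, 0, 0; 0, 1, 0; 0) in the Zorn vector matrices over ℚ_p. Then Λ is an order, its dual is Λ* = Λ(0; 0, −1, 0; −1, 0, 0; 0), there are strict inclusions Λ ⊊ Λ* ⊊ p⁻¹·Λ, and x * y ∈ p⁻¹·Λ for all x, y ∈ Λ*; moreover the ℤ_p-submodule generated by the products {x * y : x, y ∈ Λ*} equals p⁻¹·Λ. (Hence Λ is an order of type 2.) -/

import Mathlib

open Matrix Pointwise

/-- A Zorn vector matrix (split octonion) over `k`. -/
abbrev Zorn (k : Type*) := k × (Fin 3 → k) × (Fin 3 → k) × k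

/-- The Zorn product of two Zorn vector matrices. -/
def zmul {k : Type*} [Field k] (x y : Zorn k) : Zorn k :=
  (x.1 * y.1 + x.2.1 ⬝ᵥ y.2.2.1,
   x.1 • y.2.1 + y.2.2.2 • x.2.1 - x.2.2.1 ⨯₃ y.2.2.1,
   y.1 • x.2.2.1 + x.2.2.2 • y.2.2.1 + x.2.1 ⨯₃ y.2.1,
   x.2.2.2 * y.2.2.2 + x.2.2.1 ⬝ᵥ y.2.1)

/-- The identity Zorn vector matrix. -/
def zone {k : Type*} [Field k] : Zorn k := (1, 0, 0, 1)

/-- The trace of a Zorn vector matrix. -/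
def zT {k : Type*} [Field k] (x : Zorn k) : k := x.1 + x.2.2.2

variable (p : ℕ) [Fact p.Prime]

/-- `a` lies in `p^n ℤ_p ⊆ ℚ_p`. -/
def inLat (n : ℤ) (a : ℚ_[p]) : Prop := ∃ z : ℤ_[p], a = (p : ℚ_[p]) ^ n * (z : ℚ_[p])

/-- The lattice `Λ(a₁; a₂, a₃, a₄; a₅, a₆, a₇; a₈)` of Zorn vector matrices over `ℚ_p`. -/
def Lam (a₁ a₂ a₃ a₄ a₅ a₆ a₇ a₈ : ℤ) : Set (Zorn ℚ_[p]) :=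
  {x | inLat p a₁ x.1 ∧ inLat p a₂ (x.2.1 0) ∧ inLat p a₃ (x.2.1 1) ∧
       inLat p a₄ (x.2.1 2) ∧ inLat p a₅ (x.2.2.1 0) ∧ inLat p a₆ (x.2.2.1 1) ∧
       inLat p a₇ (x.2.2.1 2) ∧ inLat p a₈ x.2.2.2}

/-- A set of Zorn vector matrices is an order if it contains `1` and is
closed under the Zorn product. -/
def IsOrder (S : Set (Zorn ℚ_[p])) : Prop :=
  zone ∈ S ∧ ∀ x ∈ S, ∀ y ∈ S, zmul x y ∈ S

/-- The dual of a set of Zorn vector matrices with respect to the trace form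
`T(x * y)`. -/
def dualLat (S : Set (Zorn ℚ_[p])) : Set (Zorn ℚ_[p]) :=
  {x | ∀ y ∈ S, ∃ z : ℤ_[p], (z : ℚ_[p]) = zT (zmul x y)}

/-! The lattices `Λ(e)` are boxes in the coordinates `a, v, w, d`, so everything is read off from
the exponent vector `e : Zorn ℤ`. Each coordinate of a Zorn product is a sum of monomials, so
`Λ(e) * Λ(f) ⊆ Λ(g)` is a list of valuation inequalities, one per monomial; the trace form
`T(x * y) = aa' + dd' + v ⬝ w' + w ⬝ v'` pairs `a` with `a`, `v` with `w` and `d` with `d`, so the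
dual of `Λ(a; v; w; d)` is `Λ(-a; -w; -v; -d)`; and `e ↦ Λ(e)` is an order-reversing embedding,
which gives the strict inclusions. For the span: `1 ∈ Λ*` puts `Λ*` inside `Λ* Λ*`, and the four
basis vectors of `p⁻¹Λ` that are not in `Λ*` are products of basis vectors of `Λ*`. -/

variable {p}

theorem inLat_iff_norm_le {n : ℤ} {a : ℚ_[p]} : inLat p n a ↔ ‖a‖ ≤ (p : ℝ) ^ (-n) := by
  have hp : (0 : ℝ) < p := Nat.cast_pos.mpr (Fact.out : p.Prime).pos
  constructor
  · rintro ⟨z, rfl⟩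
    rw [norm_mul, Padic.norm_p_zpow, PadicInt.padic_norm_e_of_padicInt]
    exact mul_le_of_le_one_right (by positivity) z.norm_le_one
  · intro h
    have hz : ‖(p : ℚ_[p]) ^ (-n) * a‖ ≤ 1 := by
      rwa [norm_mul, Padic.norm_p_zpow, neg_neg, ← le_inv_mul_iff₀ (by positivity), mul_one,
        ← _root_.zpow_neg]
    exact ⟨⟨_, hz⟩, by simp [zpow_ne_zero, NeZero.ne]⟩

theorem inLat_zpow_iff {m n : ℤ} : inLat p m ((p : ℚ_[p]) ^ n) ↔ m ≤ n := by
  rw [inLat_iff_norm_le, Padic.norm_p_zpow,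
    zpow_le_zpow_iff_right₀ (Nat.one_lt_cast.mpr (Fact.out : p.Prime).one_lt), neg_le_neg_iff]

@[simp]
theorem inLat_one_iff {n : ℤ} : inLat p n 1 ↔ n ≤ 0 := by
  simpa using inLat_zpow_iff (p := p) (m := n) (n := 0)

theorem inLat_zpow_mul_iff {m n : ℤ} {a : ℚ_[p]} :
    inLat p m ((p : ℚ_[p]) ^ n * a) ↔ inLat p (m - n) a := by
  have hp : (0 : ℝ) < p := Nat.cast_pos.mpr (Fact.out : p.Prime).pos
  rw [inLat_iff_norm_le, inLat_iff_norm_le, norm_mul, Padic.norm_p_zpow,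
    ← le_inv_mul_iff₀ (by positivity), ← _root_.zpow_neg, ← zpow_add₀ hp.ne', neg_neg, neg_sub,
    ← sub_eq_add_neg]

theorem inLat_of_le {m n : ℤ} {a : ℚ_[p]} (h : m ≤ n) (ha : inLat p n a) : inLat p m a := by
  rw [inLat_iff_norm_le] at ha ⊢
  exact ha.trans (zpow_le_zpow_right₀ (Nat.one_le_cast.mpr (Fact.out : p.Prime).one_le) (by omega))

@[simp]
theorem inLat_zero (n : ℤ) : inLat p n 0 := ⟨0, by simp⟩

theorem inLat_add {n : ℤ} {a b : ℚ_[p]} (ha : inLat p n a) (hb : inLat p n b) :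
    inLat p n (a + b) := by
  obtain ⟨z, rfl⟩ := ha; obtain ⟨w, rfl⟩ := hb
  exact ⟨z + w, by push_cast; ring⟩

theorem inLat_sub {n : ℤ} {a b : ℚ_[p]} (ha : inLat p n a) (hb : inLat p n b) :
    inLat p n (a - b) := by
  obtain ⟨z, rfl⟩ := ha; obtain ⟨w, rfl⟩ := hb
  exact ⟨z - w, by push_cast; ring⟩

theorem inLat_mul {k m n : ℤ} {a b : ℚ_[p]} (h : k ≤ m + n) (ha : inLat p m a)
    (hb : inLat p n b) : inLat p k (a * b) := by
  obtain ⟨z, rfl⟩ := ha; obtain ⟨w, rfl⟩ := hb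
  refine inLat_of_le h ⟨z * w, ?_⟩
  rw [zpow_add₀ (NeZero.ne (p : ℚ_[p]))]
  push_cast; ring

theorem inLat_smul (c : ℤ_[p]) {n : ℤ} {a : ℚ_[p]} (ha : inLat p n a) : inLat p n (c • a) := by
  obtain ⟨z, rfl⟩ := ha
  exact ⟨c * z, by rw [Algebra.smul_def, PadicInt.algebraMap_apply]; push_cast; ring⟩

theorem inLat_dotProduct {k : ℤ} {m n : Fin 3 → ℤ} {u v : Fin 3 → ℚ_[p]}
    (h : ∀ i, k ≤ m i + n i) (hu : ∀ i, inLat p (m i) (u i)) (hv : ∀ i, inLat p (n i) (v i)) :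
    inLat p k (u ⬝ᵥ v) :=
  Finset.sum_induction _ _ (fun _ _ => inLat_add) (inLat_zero k)
    fun i _ => inLat_mul (h i) (hu i) (hv i)

theorem cross_apply_cyclic {R : Type*} [CommRing R] (u w : Fin 3 → R) (i : Fin 3) :
    (u ⨯₃ w) i = u (i + 1) * w (i + 2) - u (i + 2) * w (i + 1) := by
  fin_cases i <;> simp [cross_apply]

theorem zT_zmul {k : Type*} [Field k] (x y : Zorn k) :
    zT (zmul x y) = x.1 * y.1 + x.2.2.2 * y.2.2.2 + x.2.1 ⬝ᵥ y.2.2.1 + x.2.2.1 ⬝ᵥ y.2.1 := by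
  simp only [zT, zmul]; ring

theorem zmul_zone {k : Type*} [Field k] (x : Zorn k) : zmul x zone = x := by
  simp [zmul, zone]

theorem subset_span_zmul_of_zone_mem {S : Set (Zorn ℚ_[p])} (h : zone ∈ S) :
    S ⊆ Submodule.span ℤ_[p] {z | ∃ x ∈ S, ∃ y ∈ S, z = zmul x y} :=
  fun x hx => Submodule.subset_span ⟨x, hx, zone, h, (zmul_zone x).symm⟩

variable (p) in
/-- `Λ(a₁; a₂, a₃, a₄; a₅, a₆, a₇; a₈)` indexed by the exponent vector
`(a₁, ![a₂, a₃, a₄], ![a₅, a₆, a₇], a₈) : Zorn ℤ`, as a `ℤ_p`-submodule. -/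
def zornLattice (e : Zorn ℤ) : Submodule ℤ_[p] (Zorn ℚ_[p]) where
  carrier := {x | inLat p e.1 x.1 ∧ (∀ i, inLat p (e.2.1 i) (x.2.1 i)) ∧
    (∀ i, inLat p (e.2.2.1 i) (x.2.2.1 i)) ∧ inLat p e.2.2.2 x.2.2.2}
  add_mem' := fun ⟨ha, hv, hw, hd⟩ ⟨ha', hv', hw', hd'⟩ =>
    ⟨inLat_add ha ha', fun i => inLat_add (hv i) (hv' i), fun i => inLat_add (hw i) (hw' i),
      inLat_add hd hd'⟩
  zero_mem' := ⟨inLat_zero _, fun _ => inLat_zero _, fun _ => inLat_zero _, inLat_zero _⟩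
  smul_mem' c _ := fun ⟨ha, hv, hw, hd⟩ =>
    ⟨inLat_smul c ha, fun i => inLat_smul c (hv i), fun i => inLat_smul c (hw i), inLat_smul c hd⟩

/-- One inequality for each monomial of the Zorn product, so that `Λ(e) * Λ(f) ⊆ Λ(g)`. -/
def MulExpBound (e f g : Zorn ℤ) : Prop :=
  ∀ i : Fin 3,
    (g.1 ≤ e.1 + f.1 ∧ g.1 ≤ e.2.1 i + f.2.2.1 i) ∧
    (g.2.1 i ≤ e.1 + f.2.1 i ∧ g.2.1 i ≤ f.2.2.2 + e.2.1 i ∧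
      g.2.1 i ≤ e.2.2.1 (i + 1) + f.2.2.1 (i + 2) ∧
      g.2.1 i ≤ e.2.2.1 (i + 2) + f.2.2.1 (i + 1)) ∧
    (g.2.2.1 i ≤ f.1 + e.2.2.1 i ∧ g.2.2.1 i ≤ e.2.2.2 + f.2.2.1 i ∧
      g.2.2.1 i ≤ e.2.1 (i + 1) + f.2.1 (i + 2) ∧
      g.2.2.1 i ≤ e.2.1 (i + 2) + f.2.1 (i + 1)) ∧
    (g.2.2.2 ≤ e.2.2.2 + f.2.2.2 ∧ g.2.2.2 ≤ e.2.2.1 i + f.2.1 i)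

section zornLattice

variable {e f g : Zorn ℤ} {x y : Zorn ℚ_[p]}

theorem mem_zornLattice : x ∈ zornLattice p e ↔ inLat p e.1 x.1 ∧
    (∀ i, inLat p (e.2.1 i) (x.2.1 i)) ∧ (∀ i, inLat p (e.2.2.1 i) (x.2.2.1 i)) ∧
    inLat p e.2.2.2 x.2.2.2 :=
  Iff.rfl

theorem coe_zornLattice : (zornLattice p e : Set (Zorn ℚ_[p])) =
    Lam p e.1 (e.2.1 0) (e.2.1 1) (e.2.1 2) (e.2.2.1 0) (e.2.2.1 1) (e.2.2.1 2) e.2.2.2 := by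
  ext x
  simp [mem_zornLattice, Lam, Fin.forall_fin_succ, and_assoc]

@[simp]
theorem mk_a_mem_zornLattice_iff {c : ℚ_[p]} :
    ((c, 0, 0, 0) : Zorn ℚ_[p]) ∈ zornLattice p e ↔ inLat p e.1 c := by
  simp [mem_zornLattice]

@[simp]
theorem mk_v_single_mem_zornLattice_iff {i : Fin 3} {c : ℚ_[p]} :
    ((0, Pi.single i c, 0, 0) : Zorn ℚ_[p]) ∈ zornLattice p e ↔ inLat p (e.2.1 i) c := by
  refine ⟨fun h => by simpa using h.2.1 i, fun h => ?_⟩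
  refine ⟨inLat_zero _, fun j => ?_, fun _ => inLat_zero _, inLat_zero _⟩
  obtain rfl | hj := eq_or_ne j i <;> simp [*]

@[simp]
theorem mk_w_single_mem_zornLattice_iff {i : Fin 3} {c : ℚ_[p]} :
    ((0, 0, Pi.single i c, 0) : Zorn ℚ_[p]) ∈ zornLattice p e ↔ inLat p (e.2.2.1 i) c := by
  refine ⟨fun h => by simpa using h.2.2.1 i, fun h => ?_⟩
  refine ⟨inLat_zero _, fun _ => inLat_zero _, fun j => ?_, inLat_zero _⟩
  obtain rfl | hj := eq_or_ne j i <;> simp [*]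

@[simp]
theorem mk_d_mem_zornLattice_iff {c : ℚ_[p]} :
    ((0, 0, 0, c) : Zorn ℚ_[p]) ∈ zornLattice p e ↔ inLat p e.2.2.2 c := by
  simp [mem_zornLattice]

theorem zornLattice_le_zornLattice_iff : zornLattice p e ≤ zornLattice p f ↔ f ≤ e := by
  constructor
  · intro h
    have hx := h (x := ((p : ℚ_[p]) ^ e.1, fun i => (p : ℚ_[p]) ^ e.2.1 i,
      fun i => (p : ℚ_[p]) ^ e.2.2.1 i, (p : ℚ_[p]) ^ e.2.2.2))
      (by simp [mem_zornLattice, inLat_zpow_iff])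
    simp only [mem_zornLattice, inLat_zpow_iff] at hx
    exact ⟨hx.1, hx.2.1, hx.2.2.1, hx.2.2.2⟩
  · rintro ⟨ha, hv, hw, hd⟩ x ⟨hxa, hxv, hxw, hxd⟩
    exact ⟨inLat_of_le ha hxa, fun i => inLat_of_le (hv i) (hxv i),
      fun i => inLat_of_le (hw i) (hxw i), inLat_of_le hd hxd⟩

theorem zornLattice_lt_zornLattice_iff : zornLattice p e < zornLattice p f ↔ f < e := by
  simp only [lt_iff_le_not_ge, zornLattice_le_zornLattice_iff]

theorem zmul_mem_zornLattice (h : MulExpBound e f g) (hx : x ∈ zornLattice p e)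
    (hy : y ∈ zornLattice p f) : zmul x y ∈ zornLattice p g := by
  obtain ⟨hxa, hxv, hxw, hxd⟩ := hx
  obtain ⟨hya, hyv, hyw, hyd⟩ := hy
  refine ⟨inLat_add (inLat_mul (h 0).1.1 hxa hya)
      (inLat_dotProduct (fun i => (h i).1.2) hxv hyw), fun i => ?_, fun i => ?_,
    inLat_add (inLat_mul (h 0).2.2.2.1 hxd hyd)
      (inLat_dotProduct (fun i => (h i).2.2.2.2) hxw hyv)⟩
  · obtain ⟨-, ⟨h₁, h₂, h₃, h₄⟩, -⟩ := h i
    simp only [zmul, Pi.add_apply, Pi.sub_apply, Pi.smul_apply, smul_eq_mul, cross_apply_cyclic]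
    exact inLat_sub (inLat_add (inLat_mul h₁ hxa (hyv i)) (inLat_mul h₂ hyd (hxv i)))
      (inLat_sub (inLat_mul h₃ (hxw _) (hyw _)) (inLat_mul h₄ (hxw _) (hyw _)))
  · obtain ⟨-, -, ⟨h₁, h₂, h₃, h₄⟩, -⟩ := h i
    simp only [zmul, Pi.add_apply, Pi.smul_apply, smul_eq_mul, cross_apply_cyclic]
    exact inLat_add (inLat_add (inLat_mul h₁ hya (hxw i)) (inLat_mul h₂ hxd (hyw i)))
      (inLat_sub (inLat_mul h₃ (hxv _) (hyv _)) (inLat_mul h₄ (hxv _) (hyv _)))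

theorem isOrder_zornLattice (ha : e.1 ≤ 0) (hd : e.2.2.2 ≤ 0) (h : MulExpBound e e e) :
    IsOrder p (zornLattice p e) :=
  ⟨⟨by simpa [zone] using ha, fun _ => inLat_zero _, fun _ => inLat_zero _,
      by simpa [zone] using hd⟩,
    fun _ hx _ hy => zmul_mem_zornLattice h hx hy⟩

theorem dualLat_zornLattice :
    dualLat p (zornLattice p e) = zornLattice p (-e.1, -e.2.2.1, -e.2.1, -e.2.2.2) := by
  have key {n : ℤ} {a : ℚ_[p]} (h : ∃ z : ℤ_[p], (z : ℚ_[p]) = a * (p : ℚ_[p]) ^ n) :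
      inLat p (-n) a := by
    rw [← zero_sub, ← inLat_zpow_mul_iff, mul_comm]
    simpa [inLat, eq_comm] using h
  ext x
  constructor
  · intro hx
    refine ⟨key ?_, fun i => key ?_, fun i => key ?_, key ?_⟩
    · simpa [zT_zmul] using hx ((p : ℚ_[p]) ^ e.1, 0, 0, 0) (by simp [inLat_zpow_iff])
    · simpa [zT_zmul] using hx (0, 0, Pi.single i ((p : ℚ_[p]) ^ e.2.2.1 i), 0)
        (by simp [inLat_zpow_iff])
    · simpa [zT_zmul] using hx (0, Pi.single i ((p : ℚ_[p]) ^ e.2.1 i), 0, 0)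
        (by simp [inLat_zpow_iff])
    · simpa [zT_zmul] using hx (0, 0, 0, (p : ℚ_[p]) ^ e.2.2.2) (by simp [inLat_zpow_iff])
  · rintro ⟨hxa, hxv, hxw, hxd⟩ y ⟨hya, hyv, hyw, hyd⟩
    have hT : inLat p 0 (zT (zmul x y)) := by
      rw [zT_zmul]
      refine inLat_add (inLat_add (inLat_add (inLat_mul ?_ hxa hya) (inLat_mul ?_ hxd hyd))
        (inLat_dotProduct (fun _ => ?_) hxv hyw)) (inLat_dotProduct (fun _ => ?_) hxw hyv) <;>
      simp
    simpa [inLat, eq_comm] using hT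

theorem zpow_smul_zornLattice (n : ℤ) :
    (p : ℚ_[p]) ^ n • (zornLattice p e : Set (Zorn ℚ_[p])) = zornLattice p (e + n • 1) := by
  ext x
  rw [Set.mem_smul_set_iff_inv_smul_mem₀ (zpow_ne_zero n (NeZero.ne _)), ← _root_.zpow_neg]
  simp [mem_zornLattice, inLat_zpow_mul_iff, -_root_.zpow_neg]

theorem zornLattice_le_of_basis {M : Submodule ℤ_[p] (Zorn ℚ_[p])}
    (ha : ((p : ℚ_[p]) ^ e.1, 0, 0, 0) ∈ M)
    (hv : ∀ i, ((0 : ℚ_[p]), Pi.single i ((p : ℚ_[p]) ^ e.2.1 i), 0, 0) ∈ M)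
    (hw : ∀ i, ((0 : ℚ_[p]), 0, Pi.single i ((p : ℚ_[p]) ^ e.2.2.1 i), 0) ∈ M)
    (hd : ((0 : ℚ_[p]), 0, 0, (p : ℚ_[p]) ^ e.2.2.2) ∈ M) :
    zornLattice p e ≤ M := by
  rintro x ⟨⟨za, hza⟩, hxv, hxw, ⟨zd, hzd⟩⟩
  choose zv hzv using hxv
  choose zw hzw using hxw
  have hx : x = za • ((p : ℚ_[p]) ^ e.1, 0, 0, 0) +
      ∑ i, zv i • ((0 : ℚ_[p]), Pi.single i ((p : ℚ_[p]) ^ e.2.1 i), 0, 0) +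
      ∑ i, zw i • ((0 : ℚ_[p]), 0, Pi.single i ((p : ℚ_[p]) ^ e.2.2.1 i), 0) +
      zd • ((0 : ℚ_[p]), 0, 0, (p : ℚ_[p]) ^ e.2.2.2) := by
    ext <;> simp [hza, hzd, hzv, hzw, Prod.fst_sum, Prod.snd_sum, Finset.sum_apply,
      Pi.single_apply, Algebra.smul_def, mul_comm]
  rw [hx]
  exact add_mem (add_mem (add_mem (M.smul_mem _ ha) (sum_mem fun i _ => M.smul_mem _ (hv i)))
    (sum_mem fun i _ => M.smul_mem _ (hw i))) (M.smul_mem _ hd)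

end zornLattice

theorem pinv_lam_le_span_zmul_dual :
    zornLattice p (-1, ![0, -1, -1], ![-1, 0, -1], -1) ≤
      Submodule.span ℤ_[p] {z | ∃ x ∈ (zornLattice p (0, ![0, -1, 0], ![-1, 0, 0], 0) : Set _),
        ∃ y ∈ (zornLattice p (0, ![0, -1, 0], ![-1, 0, 0], 0) : Set _), z = zmul x y} := by
  set D := zornLattice p (0, ![0, -1, 0], ![-1, 0, 0], 0)
  set M := Submodule.span ℤ_[p] {z | ∃ x ∈ (D : Set (Zorn ℚ_[p])), ∃ y ∈ (D : Set _), z = zmul x y}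
  have hD : ∀ x ∈ D, x ∈ M := subset_span_zmul_of_zone_mem (by simp [D, mem_zornLattice, zone])
  have hprod : ∀ x ∈ D, ∀ y ∈ D, zmul x y ∈ M :=
    fun x hx y hy => Submodule.subset_span ⟨x, hx, y, hy, rfl⟩
  have hq : inLat p (-1) ((p : ℚ_[p]) ^ (-1 : ℤ)) := inLat_zpow_iff.mpr le_rfl
  apply zornLattice_le_of_basis
  · convert hprod (0, Pi.single 0 1, 0, 0) (by simp [D])
      (0, 0, Pi.single 0 ((p : ℚ_[p]) ^ (-1 : ℤ)), 0) (by simpa [D] using hq) using 1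
    simp [zmul]
  · intro i
    fin_cases i
    · exact hD _ (by simp [D])
    · exact hD _ (by simpa [D] using hq)
    · convert hprod (0, 0, Pi.single 1 1, 0) (by simp [D])
        (0, 0, Pi.single 0 ((p : ℚ_[p]) ^ (-1 : ℤ)), 0) (by simpa [D] using hq) using 1
      simp [zmul, cross_apply, Prod.ext_iff, funext_iff, Fin.forall_fin_succ]
  · intro i
    fin_cases i
    · exact hD _ (by simpa [D] using hq)
    · exact hD _ (by simp [D])
    · convert hprod (0, Pi.single 0 1, 0, 0) (by simp [D])
        (0, Pi.single 1 ((p : ℚ_[p]) ^ (-1 : ℤ)), 0, 0) (by simpa [D] using hq) using 1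
      simp [zmul, cross_apply, Prod.ext_iff, funext_iff, Fin.forall_fin_succ]
  · convert hprod (0, 0, Pi.single 0 ((p : ℚ_[p]) ^ (-1 : ℤ)), 0) (by simpa [D] using hq)
      (0, Pi.single 0 1, 0, 0) (by simp [D]) using 1
    simp [zmul]

variable (p)

theorem lam_type_two :
    IsOrder p (Lam p 0 1 0 0 0 1 0 0) ∧
    dualLat p (Lam p 0 1 0 0 0 1 0 0) = Lam p 0 0 (-1) 0 (-1) 0 0 0 ∧
    Lam p 0 1 0 0 0 1 0 0 ⊂ dualLat p (Lam p 0 1 0 0 0 1 0 0) ∧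
    dualLat p (Lam p 0 1 0 0 0 1 0 0) ⊂ ((p : ℚ_[p])⁻¹ • Lam p 0 1 0 0 0 1 0 0) ∧
    (∀ x ∈ dualLat p (Lam p 0 1 0 0 0 1 0 0), ∀ y ∈ dualLat p (Lam p 0 1 0 0 0 1 0 0),
      zmul x y ∈ ((p : ℚ_[p])⁻¹ • Lam p 0 1 0 0 0 1 0 0)) ∧
    (Submodule.span ℤ_[p]
        {z : Zorn ℚ_[p] | ∃ x ∈ dualLat p (Lam p 0 1 0 0 0 1 0 0),
          ∃ y ∈ dualLat p (Lam p 0 1 0 0 0 1 0 0), z = zmul x y} : Set (Zorn ℚ_[p])) =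
      ((p : ℚ_[p])⁻¹ • Lam p 0 1 0 0 0 1 0 0) := by
  have hΛ : Lam p 0 1 0 0 0 1 0 0 = zornLattice p (0, ![1, 0, 0], ![0, 1, 0], 0) :=
    (coe_zornLattice (e := (0, ![1, 0, 0], ![0, 1, 0], 0))).symm
  have hdual : dualLat p (Lam p 0 1 0 0 0 1 0 0) =
      zornLattice p (0, ![0, -1, 0], ![-1, 0, 0], 0) := by
    rw [hΛ, dualLat_zornLattice]
    congr 2
    decide
  have hinv : (p : ℚ_[p])⁻¹ • Lam p 0 1 0 0 0 1 0 0 =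
      zornLattice p (-1, ![0, -1, -1], ![-1, 0, -1], -1) := by
    rw [hΛ, ← _root_.zpow_neg_one, zpow_smul_zornLattice]
    congr 2
    decide
  have hmul : MulExpBound (0, ![0, -1, 0], ![-1, 0, 0], 0) (0, ![0, -1, 0], ![-1, 0, 0], 0)
      (-1, ![0, -1, -1], ![-1, 0, -1], -1) := by
    unfold MulExpBound; decide
  have hlt : ((0, ![0, -1, 0], ![-1, 0, 0], 0) : Zorn ℤ) < (0, ![1, 0, 0], ![0, 1, 0], 0) ∧
      ((-1, ![0, -1, -1], ![-1, 0, -1], -1) : Zorn ℤ) < (0, ![0, -1, 0], ![-1, 0, 0], 0) := by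
    simp [Prod.lt_iff, Pi.lt_def, Prod.le_def, Pi.le_def, Fin.forall_fin_succ, Fin.exists_fin_succ]
  rw [hdual, hinv, hΛ]
  refine ⟨isOrder_zornLattice le_rfl le_rfl (by unfold MulExpBound; decide), coe_zornLattice,
    SetLike.coe_ssubset_coe.mpr (zornLattice_lt_zornLattice_iff.mpr hlt.1),
    SetLike.coe_ssubset_coe.mpr (zornLattice_lt_zornLattice_iff.mpr hlt.2),
    fun x hx y hy => zmul_mem_zornLattice hmul hx hy,
    congrArg _ (le_antisymm ?_ pinv_lam_le_span_zmul_dual)⟩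
  exact Submodule.span_le.mpr fun _ ⟨x, hx, y, hy, hz⟩ => hz ▸ zmul_mem_zornLattice hmul hx hy
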